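/- Let B_w be an invertible bilateral weighted backward shift on ℓp(ℤ) (1 ≤ p < ∞) or c0(ℤ) with weights bounded and bounded away from zero and with no nontrivial periodic points. If B_w has the periodic shadowing property, then CR(B_w) = {0}. -/
import Mathlib


open Finset

/-- `ℓᵖ(ℤ)`. -/
abbrev LpZ (p : ENNReal) := lp (fun _ : ℤ => ℝ) p

/-- `c₀(ℤ)`. -/
abbrev C0Z := ZeroAtInftyContinuousMap ℤ ℝ

section Defs

variable {X : Type*} [NormedAddCommGroup X] [NormedSpace ℝ X]

/-- `o : ℤ → X` is a full orbit of `T`. -/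
def IsOrbit (T : X ≃L[ℝ] X) (o : ℤ → X) : Prop := ∀ j : ℤ, o (j + 1) = T (o j)

/-- `(x_j)_{j ∈ ℤ}` is a `δ`-pseudotrajectory of `T`. -/
def IsPT (T : X ≃L[ℝ] X) (δ : ℝ) (x : ℤ → X) : Prop :=
  ∀ j : ℤ, ‖T (x j) - x (j + 1)‖ < δ

/-- A sequence `x : ℤ → X` is periodic. -/
def IsPer (x : ℤ → X) : Prop := ∃ p : ℕ, 1 ≤ p ∧ ∀ j : ℤ, x (j + p) = x j

/-- The shadowing property: every `δ`-pseudotrajectory is `ε`-shadowed by some full orbit. -/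
def SP (T : X ≃L[ℝ] X) : Prop :=
  ∀ ε > (0 : ℝ), ∃ δ > (0 : ℝ), ∀ x : ℤ → X, IsPT T δ x →
    ∃ o : ℤ → X, IsOrbit T o ∧ ∀ j : ℤ, ‖x j - o j‖ < ε

/-- The periodic shadowing property: every periodic `δ`-pseudotrajectory is `ε`-shadowed
by (the orbit of) a periodic point. -/
def PSP (T : X ≃L[ℝ] X) : Prop :=
  ∀ ε > (0 : ℝ), ∃ δ > (0 : ℝ), ∀ x : ℤ → X, IsPT T δ x → IsPer x →
    ∃ o : ℤ → X, IsOrbit T o ∧ IsPer o ∧ ∀ j : ℤ, ‖x j - o j‖ < ε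

/-- `x` is a chain recurrent point of `T`: for every `δ > 0` there is a finite
`δ`-chain from `x` to `x`. -/
def ChainRec (T : X →L[ℝ] X) (x : X) : Prop :=
  ∀ δ > (0 : ℝ), ∃ (k : ℕ) (c : ℕ → X), 1 ≤ k ∧ c 0 = x ∧ c k = x ∧
    ∀ j < k, ‖T (c j) - c (j + 1)‖ < δ

/-- `T` has no nontrivial periodic point. -/
def OnlyTrivialPer (T : X →L[ℝ] X) : Prop :=
  ∀ x : X, (∃ p : ℕ, 1 ≤ p ∧ (T ^ p) x = x) → x = 0

end Defs

lemma key_psp {X : Type*} [NormedAddCommGroup X] [NormedSpace ℝ X] (T : X ≃L[ℝ] X)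
    (hOT : OnlyTrivialPer (T : X →L[ℝ] X)) (hPSP : PSP T) (x : X)
    (hCR : ChainRec (T : X →L[ℝ] X) x) : x = 0 := by
  by_contra hx
  have hε : (0:ℝ) < ‖x‖ := norm_pos_iff.mpr hx
  obtain ⟨δ, hδ, hsh⟩ := hPSP ‖x‖ hε
  obtain ⟨k, c, hk, hc0, hck, hch⟩ := hCR δ hδ
  have hkpos : (0:ℤ) < (k:ℤ) := by exact_mod_cast hk
  set y : ℤ → X := fun j => c ((j % (k:ℤ)).toNat) with hy
  have hmod : ∀ j : ℤ, 0 ≤ j % (k:ℤ) ∧ j % (k:ℤ) < (k:ℤ) := fun j =>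
    ⟨Int.emod_nonneg j (by omega), Int.emod_lt_of_pos j hkpos⟩
  have hstep : ∀ j : ℤ, y (j+1) = c ((j % (k:ℤ)).toNat + 1) := by
    intro j
    obtain ⟨h1, h2⟩ := hmod j
    set m := j % (k:ℤ) with hm
    have hmm : m % (k:ℤ) = m := Int.emod_eq_of_lt h1 h2
    have hjm : (j+1) % (k:ℤ) = (m+1) % (k:ℤ) := by
      conv_rhs => rw [hm]
      rw [Int.emod_add_emod]
    by_cases hc : m + 1 < (k:ℤ)
    · have : (m+1) % (k:ℤ) = m + 1 := Int.emod_eq_of_lt (by omega) hc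
      simp only [hy, hjm, this]
      congr 1
      omega
    · have hmk : m + 1 = (k:ℤ) := by omega
      have : (m+1) % (k:ℤ) = 0 := by rw [hmk, Int.emod_self]
      simp only [hy, hjm, this]
      have hmn : m.toNat + 1 = k := by omega
      rw [hmn]
      simp only [Int.toNat_zero]
      rw [hc0, ← hck]
  have hPT : IsPT T δ y := by
    intro j
    rw [hstep j]
    have hr : ((j % (k:ℤ)).toNat) < k := by
      obtain ⟨h1, h2⟩ := hmod j
      omega
    exact hch _ hr
  have hPer : IsPer y := by
    refine ⟨k, hk, fun j => ?_⟩
    simp only [hy]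
    congr 2
    simpa using Int.add_mul_emod_self_left j (k:ℤ) 1
  obtain ⟨o, hOrb, ⟨q, hq, hqper⟩, hsh'⟩ := hsh y hPT hPer
  have horb : ∀ n : ℕ, o (n : ℤ) = (((T : X →L[ℝ] X))^n) (o 0) := by
    intro n
    induction n with
    | zero => simp
    | succ n ih =>
      have h1 := hOrb (n : ℤ)
      have h2 : ((n:ℤ) + 1) = ((n+1 : ℕ) : ℤ) := by push_cast; ring
      rw [h2] at h1
      rw [h1, ih, pow_succ', ContinuousLinearMap.mul_apply]
      rfl
  have hfix : (((T : X →L[ℝ] X))^q) (o 0) = o 0 := by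
    rw [← horb q]
    simpa using hqper 0
  have ho0 : o 0 = 0 := hOT _ ⟨q, hq, hfix⟩
  have hlt := hsh' 0
  have hy0 : y 0 = x := by simp [hy, hc0]
  rw [hy0, ho0, sub_zero] at hlt
  exact lt_irrefl _ hlt

/-- If an invertible bilateral weighted backward shift on `ℓᵖ(ℤ)` (`1 ≤ p < ∞`) or
`c₀(ℤ)` with weights bounded and bounded away from zero has no nontrivial periodic
points and has the periodic shadowing property, then its only chain recurrent point
is `0`. -/
theorem stmt10 (w : ℤ → ℝ) (hbd : ∃ C : ℝ, ∀ n : ℤ, |w n| ≤ C)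
    (hbelow : ∃ c > (0 : ℝ), ∀ n : ℤ, c ≤ |w n|) :
    (∀ (p : ENNReal) [Fact (1 ≤ p)], p ≠ ⊤ →
      ∀ T : LpZ p ≃L[ℝ] LpZ p,
        (∀ (x : LpZ p) (n : ℤ), (T x) n = w (n + 1) * x (n + 1)) →
        OnlyTrivialPer (T : LpZ p →L[ℝ] LpZ p) → PSP T →
        ∀ x : LpZ p, ChainRec (T : LpZ p →L[ℝ] LpZ p) x → x = 0) ∧
    (∀ T : C0Z ≃L[ℝ] C0Z,
        (∀ (x : C0Z) (n : ℤ), (T x) n = w (n + 1) * x (n + 1)) →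
        OnlyTrivialPer (T : C0Z →L[ℝ] C0Z) → PSP T →
        ∀ x : C0Z, ChainRec (T : C0Z →L[ℝ] C0Z) x → x = 0) := by
  constructor
  · intro p _ _ T _ hOT hPSP x hCR
    exact key_psp T hOT hPSP x hCR
  · intro T _ hOT hPSP x hCR
    exact key_psp T hOT hPSP x hCR
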